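/- Let p > 1 and let δ be a real number with δ ≤ −1 or δ ≥ p−1. Then the operator Ĥ^δ_p, defined for a = {a_n}_{n≥2} by Ĥ^δ_p(a)(m) = (log m)^{δ/p} / m^{1/p} · Σ_{n=2}^∞ (log n)^{−δ/p} / ( n^{1/p'} · log(mn) ) · a_n for m ≥ 2, is not bounded on l^p; that is, there is no constant C > 0 such that ‖Ĥ^δ_p a‖_p ≤ C‖a‖_p for all a ∈ l^p. -/

import Mathlib

/-!
For `δ ≥ p - 1` the operator already fails on the unit vector `e₂`: `|Ĥ e₂ (m)|^p` is
comparable to `(log m)^(δ - p) / m ≥ 1 / (m log m)`, whose series diverges, so `Ĥ e₂ ∉ l^p`.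

For `δ ≤ -1` it fails on the single coordinate `a ↦ Ĥ a (2) = w ∑ₙ bₙ aₙ`: testing it against
the truncations of `b^(p' - 1)` (the equality case of Hölder's inequality) shows that
boundedness would force `b ∈ l^(p')`, whereas `bₙ^(p') ≥ 2^(-p') / (n log n)`.

Both lower bounds come from `log (2x) ≤ 2 log x`, and the divergence of `∑ 1 / (n log n)`
from Cauchy condensation.
-/

open scoped ENNReal

/-- The `l^p` norm of a sequence indexed from `n = 2` (entry `n` of the abstract
sequence corresponds to `a (n)`, and we sum over `n ≥ 2` via the shift `n + 2`). -/
noncomputable def lpNorm (p : ℝ) (a : ℕ → ℂ) : ℝ≥0∞ :=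
  (∑' n : ℕ, (‖a (n + 2)‖₊ : ℝ≥0∞) ^ p) ^ (1 / p)

/-- The operator `Ĥ^δ_p`:
`Ĥ^δ_p(a)(m) = (log m)^{δ/p} m^{-1/p} ∑_{n≥2} (log n)^{-δ/p} / (n^{1/p'} log(mn)) a_n`,
where `q = p'` is the conjugate exponent of `p`. -/
noncomputable def hatH (p q δ : ℝ) (a : ℕ → ℂ) : ℕ → ℂ := fun m =>
  ((Real.log m ^ (δ / p) / (m : ℝ) ^ (1 / p) : ℝ) : ℂ) *
    ∑' n : ℕ,
      ((Real.log ((n : ℝ) + 2) ^ (-(δ / p)) /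
          (((n : ℝ) + 2) ^ (1 / q) * Real.log ((m : ℝ) * ((n : ℝ) + 2))) : ℝ) : ℂ) *
        a (n + 2)

open Real Finset Filter

theorem Real.not_summable_inv_natCast_mul_log :
    ¬ Summable fun n : ℕ => ((n : ℝ) * log n)⁻¹ := by
  have h_nonneg : 0 ≤ᶠ[atTop] fun n : ℕ => ((n : ℝ) * log n)⁻¹ :=
    Eventually.of_forall fun n => by simp only [Pi.zero_apply]; positivity
  have h_mono : ∀ᶠ n : ℕ in atTop,
      (((n + 1 : ℕ) : ℝ) * log (n + 1 : ℕ))⁻¹ ≤ ((n : ℝ) * log n)⁻¹ := by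
    filter_upwards [eventually_ge_atTop 2] with n hn
    have hn' : (2 : ℝ) ≤ n := by exact_mod_cast hn
    have := log_pos (by linarith : (1 : ℝ) < n)
    gcongr <;> simp
  rw [← summable_condensed_iff_of_eventually_nonneg h_nonneg h_mono]
  intro h
  refine not_summable_natCast_inv
    ((summable_mul_right_iff (inv_ne_zero (log_pos one_lt_two).ne')).mp (h.congr fun k => ?_))
  rcases eq_or_ne k 0 with rfl | hk
  · simp
  · push_cast
    rw [log_pow]
    field_simp

theorem not_summable_of_mul_inv_natCast_mul_log_le {f : ℕ → ℝ} {c : ℝ} (hc : 0 < c)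
    (hf : ∀ᶠ n : ℕ in atTop, c * ((n : ℝ) * log n)⁻¹ ≤ f n) : ¬ Summable f := fun h =>
  not_summable_inv_natCast_mul_log <| (summable_mul_left_iff hc.ne').mp <|
    h.of_norm_bounded_eventually_nat <| by
      filter_upwards [hf] with n hn
      rwa [Real.norm_of_nonneg (by positivity)]

theorem Real.exp_one_le_natCast {n : ℕ} (hn : 3 ≤ n) : exp 1 ≤ n :=
  exp_one_lt_d9.le.trans <| by
    have : (3 : ℝ) ≤ n := by exact_mod_cast hn
    linarith

theorem Real.log_two_mul_le {x : ℝ} (hx : 2 ≤ x) : log (2 * x) ≤ 2 * log x := by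
  rw [log_mul two_ne_zero (by linarith), two_mul]
  gcongr

theorem Real.div_rpow_mul_inv_mul_log_le {x s β c : ℝ} (hx : exp 1 ≤ x) (hs : 0 < s)
    (hc : 0 ≤ c) (hβ : 1 - 1 / s ≤ β) :
    (c / 2) ^ s * (x * log x)⁻¹ ≤ (c * (log x ^ β / (x ^ (1 / s) * log (2 * x)))) ^ s := by
  have hx2 : 2 ≤ x := (by linarith [exp_one_gt_d9] : (2 : ℝ) ≤ exp 1).trans hx
  have hx0 : 0 < x := by linarith
  have hlog : 1 ≤ log x := by rwa [le_log_iff_exp_le hx0]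
  have hlog0 : 0 < log x := by linarith
  have hbase : c / 2 * (x * log x) ^ (-(1 / s)) ≤
      c * (log x ^ β / (x ^ (1 / s) * log (2 * x))) :=
    calc c / 2 * (x * log x) ^ (-(1 / s)) = c / 2 * (log x ^ (-(1 / s)) / x ^ (1 / s)) := by
          rw [mul_rpow hx0.le hlog0.le, rpow_neg hx0.le]
          ring
      _ ≤ c / 2 * (log x ^ (β - 1) / x ^ (1 / s)) := by
          gcongr
          linarith
      _ = c * (log x ^ β / (x ^ (1 / s) * (2 * log x))) := by
          rw [rpow_sub_one hlog0.ne']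
          field_simp
      _ ≤ c * (log x ^ β / (x ^ (1 / s) * log (2 * x))) := by
          have : 0 < log (2 * x) := log_pos (by linarith)
          gcongr
          exact log_two_mul_le hx2
  calc (c / 2) ^ s * (x * log x)⁻¹ = (c / 2 * (x * log x) ^ (-(1 / s))) ^ s := by
        rw [mul_rpow (by positivity) (by positivity), ← rpow_mul (by positivity),
          neg_mul, one_div_mul_cancel hs.ne', rpow_neg_one]
    _ ≤ _ := rpow_le_rpow (by positivity) hbase hs.le

theorem coe_nnnorm_rpow_eq_ofReal {E : Type*} [SeminormedAddGroup E] (z : E) {p : ℝ}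
    (hp : 0 ≤ p) :
    (‖z‖₊ : ℝ≥0∞) ^ p = ENNReal.ofReal (‖z‖ ^ p) := by
  rw [← ENNReal.ofReal_rpow_of_nonneg (norm_nonneg z) hp, ofReal_norm, enorm_eq_nnnorm]

section lpNorm

variable {p : ℝ}

theorem lpNorm_eq_ofReal_sum (hp : 0 < p) {a : ℕ → ℂ} {K : ℕ}
    (ha : ∀ n, K ≤ n → a (n + 2) = 0) :
    lpNorm p a = ENNReal.ofReal ((∑ n ∈ range K, ‖a (n + 2)‖ ^ p) ^ (1 / p)) := by
  rw [lpNorm, tsum_eq_sum (s := range K) fun n hn => by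
      simp [ha n (by simpa using hn), ENNReal.zero_rpow_of_pos hp],
    ← ENNReal.ofReal_rpow_of_nonneg (by positivity) (by positivity),
    ENNReal.ofReal_sum_of_nonneg fun n _ => by positivity]
  simp only [coe_nnnorm_rpow_eq_ofReal _ hp.le]

theorem enorm_le_lpNorm (hp : 0 < p) (a : ℕ → ℂ) (n : ℕ) : ‖a (n + 2)‖ₑ ≤ lpNorm p a :=
  calc ‖a (n + 2)‖ₑ = ((‖a (n + 2)‖₊ : ℝ≥0∞) ^ p) ^ (1 / p) := by
        rw [← ENNReal.rpow_mul, mul_one_div_cancel hp.ne', ENNReal.rpow_one, enorm_eq_nnnorm]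
    _ ≤ lpNorm p a := ENNReal.rpow_le_rpow (ENNReal.le_tsum n) (by positivity)

theorem lpNorm_eq_top_of_not_summable (hp : 0 < p) {a : ℕ → ℂ}
    (h : ¬ Summable fun n => ‖a n‖ ^ p) : lpNorm p a = ⊤ := by
  rw [← summable_nat_add_iff 2] at h
  have hsum : ∑' n, (‖a (n + 2)‖₊ : ℝ≥0∞) ^ p = ⊤ := by
    by_contra hne
    refine h ((ENNReal.summable_toReal hne).congr fun n => ?_)
    rw [coe_nnnorm_rpow_eq_ofReal _ hp.le, ENNReal.toReal_ofReal (by positivity)]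
  rw [lpNorm, hsum, ENNReal.top_rpow_of_pos (by positivity)]

theorem norm_apply_le_of_lpNorm_le {C : ℝ} (hp : 0 < p) (hC : 0 ≤ C)
    {T : (ℕ → ℂ) → ℕ → ℂ}
    (hT : ∀ a, lpNorm p a ≠ ⊤ → lpNorm p (T a) ≤ ENNReal.ofReal C * lpNorm p a)
    {a : ℕ → ℂ} {K : ℕ} (ha : ∀ n, K ≤ n → a (n + 2) = 0) (m : ℕ) :
    ‖T a (m + 2)‖ ≤ C * (∑ n ∈ range K, ‖a (n + 2)‖ ^ p) ^ (1 / p) := by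
  have hfin := lpNorm_eq_ofReal_sum hp ha
  have h := (enorm_le_lpNorm hp (T a) m).trans (hT a (hfin ▸ ENNReal.ofReal_ne_top))
  rw [hfin, ← ENNReal.ofReal_mul hC, ← ofReal_norm] at h
  exact (ENNReal.ofReal_le_ofReal_iff (by positivity)).mp h

end lpNorm

theorem Real.HolderConjugate.le_div_rpow_of_mul_le_mul_rpow {p q S c C : ℝ}
    (hpq : p.HolderConjugate q) (hS : 0 ≤ S) (hc : 0 < c) (hC : 0 ≤ C)
    (h : c * S ≤ C * S ^ (1 / p)) : S ≤ (C / c) ^ q := by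
  rcases hS.eq_or_lt with rfl | hS
  · positivity
  have hq : S ^ (1 / q) ≤ C / c := by
    rw [le_div_iff₀' hc]
    refine le_of_mul_le_mul_right ?_ (rpow_pos_of_pos hS (1 / p))
    calc c * S ^ (1 / q) * S ^ (1 / p) = c * S := by
          rw [mul_assoc, ← rpow_add hS, add_comm, hpq.one_div_add_one_div, div_one, rpow_one]
      _ ≤ C * S ^ (1 / p) := h
  calc S = (S ^ (1 / q)) ^ q := by
        rw [← rpow_mul hS.le, one_div_mul_cancel hpq.symm.ne_zero, rpow_one]
    _ ≤ (C / c) ^ q := rpow_le_rpow (by positivity) hq hpq.symm.nonneg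

noncomputable def hatHKernel (p q δ m x : ℝ) : ℝ :=
  log x ^ (-(δ / p)) / (x ^ (1 / q) * log (m * x))

theorem hatH_apply_eq_sum (p q δ : ℝ) {a : ℕ → ℂ} {K : ℕ} (ha : ∀ n, K ≤ n → a (n + 2) = 0)
    (m : ℕ) :
    hatH p q δ a m = ((log m ^ (δ / p) / (m : ℝ) ^ (1 / p) : ℝ) : ℂ) *
      ∑ n ∈ range K, (hatHKernel p q δ m (n + 2) : ℂ) * a (n + 2) := by
  rw [hatH, tsum_eq_sum (s := range K) fun n hn => by simp [ha n (by simpa using hn)]]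
  rfl

theorem single_two_apply_add_two_eq_zero {n : ℕ} (hn : 1 ≤ n) :
    (Pi.single 2 1 : ℕ → ℂ) (n + 2) = 0 :=
  Pi.single_eq_of_ne (by omega) 1

theorem hatH_single_two_apply (p q δ : ℝ) (m : ℕ) :
    hatH p q δ (Pi.single 2 1) m = ((log 2 ^ (-(δ / p)) / 2 ^ (1 / q) *
      (log m ^ (δ / p) / ((m : ℝ) ^ (1 / p) * log (2 * m))) : ℝ) : ℂ) := by
  rw [hatH_apply_eq_sum p q δ (fun n => single_two_apply_add_two_eq_zero) m, sum_range_one,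
    Pi.single_eq_same, mul_one, ← Complex.ofReal_mul, hatHKernel,
    Nat.cast_zero, zero_add, mul_comm (m : ℝ) 2]
  congr 1
  ring

theorem lpNorm_hatH_single_two {p δ : ℝ} (q : ℝ) (hp : 0 < p) (hδ : p - 1 ≤ δ) :
    lpNorm p (hatH p q δ (Pi.single 2 1)) = ⊤ := by
  set c := log 2 ^ (-(δ / p)) / 2 ^ (1 / q)
  have hc : 0 < c := by
    have := log_pos one_lt_two
    positivity
  refine lpNorm_eq_top_of_not_summable hp
    (not_summable_of_mul_inv_natCast_mul_log_le (c := (c / 2) ^ p) (by positivity) ?_)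
  filter_upwards [eventually_ge_atTop 3] with m hm
  have hlog : 0 ≤ log m := log_natCast_nonneg m
  have hlog2 : 0 ≤ log (2 * m) := by exact_mod_cast log_natCast_nonneg (2 * m)
  rw [hatH_single_two_apply, Complex.norm_real, Real.norm_of_nonneg (by positivity)]
  refine div_rpow_mul_inv_mul_log_le (exp_one_le_natCast hm) hp hc.le ?_
  rw [le_div_iff₀ hp, sub_mul, one_div_mul_cancel hp.ne']
  linarith

theorem hatHKernel_nonneg (p q δ : ℝ) (m n : ℕ) : 0 ≤ hatHKernel p q δ m n := by
  have : 0 ≤ log ((m : ℝ) * n) := by exact_mod_cast log_natCast_nonneg (m * n)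
  have := log_natCast_nonneg n
  unfold hatHKernel
  positivity

theorem not_summable_hatHKernel_two_rpow {p q δ : ℝ} (hpq : p.HolderConjugate q) (hδ : δ ≤ -1) :
    ¬ Summable fun n : ℕ => hatHKernel p q δ 2 n ^ q := by
  refine not_summable_of_mul_inv_natCast_mul_log_le (c := (1 / 2) ^ q) (by positivity) ?_
  filter_upwards [eventually_ge_atTop 3] with n hn
  have hβ : 1 - 1 / q ≤ -(δ / p) := by
    rw [one_div, ← hpq.one_sub_inv, sub_sub_cancel, ← neg_div, le_div_iff₀ hpq.pos,
      inv_mul_cancel₀ hpq.ne_zero]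
    linarith
  simpa [hatHKernel] using
    div_rpow_mul_inv_mul_log_le (exp_one_le_natCast hn) hpq.symm.pos zero_le_one hβ

theorem summable_hatHKernel_two_rpow_of_bounded {p q δ C : ℝ} (hpq : p.HolderConjugate q)
    (hC : 0 ≤ C)
    (hbound : ∀ a, lpNorm p a ≠ ⊤ → lpNorm p (hatH p q δ a) ≤ ENNReal.ofReal C * lpNorm p a) :
    Summable fun n : ℕ => hatHKernel p q δ 2 n ^ q := by
  set b : ℕ → ℝ := fun n => hatHKernel p q δ 2 n
  have hb : ∀ n, 0 ≤ b n := hatHKernel_nonneg p q δ 2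
  set w := log 2 ^ (δ / p) / 2 ^ (1 / p)
  have hw : 0 < w := by
    have := log_pos one_lt_two
    positivity
  refine (summable_nat_add_iff 2).mp <|
    summable_of_sum_range_le (c := (C / w) ^ q) (fun n => rpow_nonneg (hb _) q) fun K => ?_
  -- the extremal sequence for Hölder's inequality against the row `b` of the kernel
  set a : ℕ → ℂ := fun n => if n < K + 2 then ((b n ^ (q - 1) : ℝ) : ℂ) else 0
  have ha : ∀ n, K ≤ n → a (n + 2) = 0 := fun n hn => if_neg (by omega)
  have h := norm_apply_le_of_lpNorm_le hpq.pos hC hbound ha 0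
  have hterm : ∀ n ∈ range K, (hatHKernel p q δ (2 : ℕ) (n + 2) : ℂ) * a (n + 2) =
      ((b (n + 2) ^ q : ℝ) : ℂ) := fun n hn => by
    have hb' : hatHKernel p q δ (2 : ℕ) (n + 2) = b (n + 2) := by simp [b]
    rw [show a (n + 2) = _ from if_pos (by simp at hn; omega), hb', ← Complex.ofReal_mul,
      ← rpow_one_add' (hb _) (by linarith [hpq.symm.lt]), add_sub_cancel]
  have hval : ‖hatH p q δ a 2‖ = w * ∑ n ∈ range K, b (n + 2) ^ q := by
    rw [hatH_apply_eq_sum p q δ ha 2, sum_congr rfl hterm, ← Complex.ofReal_sum,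
      ← Complex.ofReal_mul, Complex.norm_real, Nat.cast_ofNat]
    exact Real.norm_of_nonneg (mul_nonneg hw.le (sum_nonneg fun n _ => rpow_nonneg (hb _) q))
  have hnorm : ∑ n ∈ range K, ‖a (n + 2)‖ ^ p = ∑ n ∈ range K, b (n + 2) ^ q := by
    refine sum_congr rfl fun n hn => ?_
    rw [show a (n + 2) = _ from if_pos (by simp at hn; omega), Complex.norm_real,
      Real.norm_of_nonneg (rpow_nonneg (hb _) _), ← rpow_mul (hb _), hpq.symm.sub_one_mul_conj]
  rw [hval, hnorm] at h
  exact hpq.le_div_rpow_of_mul_le_mul_rpow (sum_nonneg fun n _ => rpow_nonneg (hb _) q) hw hC h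

/-- **(Claim in Remark 4.1.)** For `p > 1` and `δ ≤ −1` or `δ ≥ p−1`, the operator
`Ĥ^δ_p` is not bounded on `l^p`: there is no constant `C > 0` with
`‖Ĥ^δ_p a‖_p ≤ C ‖a‖_p` for all `a ∈ l^p`. -/
theorem hatH_not_bounded (p q δ : ℝ) (hp : 1 < p) (hq : 1 / p + 1 / q = 1)
    (hδ : δ ≤ -1 ∨ p - 1 ≤ δ) :
    ¬ ∃ C : ℝ, 0 < C ∧ ∀ a : ℕ → ℂ, lpNorm p a ≠ ⊤ →
      lpNorm p (hatH p q δ a) ≤ ENNReal.ofReal C * lpNorm p a := by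
  rintro ⟨C, hC, hbound⟩
  have hpq : p.HolderConjugate q :=
    Real.holderConjugate_iff.mpr ⟨hp, by simpa only [one_div] using hq⟩
  rcases hδ with hδ | hδ
  · exact not_summable_hatHKernel_two_rpow hpq hδ
      (summable_hatHKernel_two_rpow_of_bounded hpq hC.le hbound)
  · have hfin : lpNorm p (Pi.single 2 1) ≠ ⊤ := by
      rw [lpNorm_eq_ofReal_sum hpq.pos (K := 1) fun n => single_two_apply_add_two_eq_zero]
      exact ENNReal.ofReal_ne_top
    have h := hbound _ hfin
    rw [lpNorm_hatH_single_two q hpq.pos hδ, top_le_iff] at h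
    exact ENNReal.mul_ne_top ENNReal.ofReal_ne_top hfin h
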